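/- arXiv:1301.3659 — 2 statements merged into one kernel-verified Lean document; each statement's English description precedes it below -/
import Mathlib

section
/- For every real number s > 1, ζ(s) = lim_{q→∞} (π/(2q+1))^s · Σ_{p=1}^{q} cot^s(pπ/(2q+1)). -/
open Real Filter Finset Topology

/-! With `θ = (n + 1) π / (2q + 1)`, the `n`-th term of the sum is `(θ cot θ)^s / (n + 1)^s`.
Since `θ < tan θ` on `(0, π/2)`, we have `0 ≤ θ cot θ ≤ 1` there, so the terms are dominated by
those of `ζ(s)`; and `θ cot θ → 1` as `q → ∞`. Tannery's theorem (dominated convergence for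
series) gives the limit. -/

theorem tendsto_sum_range_mul_of_tendsto_one {w : ℕ → ℝ} (hw : Summable w) {c : ℕ → ℕ → ℝ}
    (hc : ∀ q n, n < q → |c q n| ≤ 1) (hlim : ∀ n, Tendsto (c · n) atTop (𝓝 1)) :
    Tendsto (fun q ↦ ∑ n ∈ range q, c q n * w n) atTop (𝓝 (∑' n, w n)) := by
  set F : ℕ → ℕ → ℝ := fun q n ↦ if n < q then c q n * w n else 0
  have hF : ∀ q, ∑' n, F q n = ∑ n ∈ range q, c q n * w n := fun q ↦ by
    rw [tsum_eq_sum (s := range q) fun n hn ↦ if_neg (by simpa using hn)]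
    exact sum_congr rfl fun n hn ↦ if_pos (mem_range.1 hn)
  have hbound : ∀ q n, ‖F q n‖ ≤ |w n| := fun q n ↦ by
    by_cases h : n < q
    · simpa [F, h, abs_mul] using mul_le_of_le_one_left (abs_nonneg _) (hc q n h)
    · simp [F, h]
  have hpt : ∀ n, Tendsto (F · n) atTop (𝓝 (w n)) := fun n ↦ by
    have hcw : Tendsto (fun q ↦ c q n * w n) atTop (𝓝 (1 * w n)) := (hlim n).mul_const _
    rw [one_mul] at hcw
    refine hcw.congr' ?_
    filter_upwards [eventually_gt_atTop n] with q hq using (if_pos hq).symm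
  simpa only [hF] using tendsto_tsum_of_dominated_convergence hw.abs hpt (.of_forall hbound)

theorem sum_Icc_one_eq_sum_range {M : Type*} [AddCommMonoid M] (f : ℕ → M) (q : ℕ) :
    ∑ p ∈ Icc 1 q, f p = ∑ n ∈ range q, f (n + 1) := by
  rw [range_eq_Ico, sum_Ico_add' f 0 q 1, zero_add, Ico_add_one_right_eq_Icc]

namespace Real

theorem mul_cot_eq_cos_div_sinc {x : ℝ} (hx : x ≠ 0) : x * cot x = cos x / sinc x := by
  rw [cot_eq_cos_div_sin, sinc_of_ne_zero hx]
  field_simp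

theorem tendsto_mul_cot_nhdsNE_zero : Tendsto (fun x ↦ x * cot x) (𝓝[≠] 0) (𝓝 1) := by
  have hcont : ContinuousAt (fun x ↦ cos x / sinc x) 0 :=
    continuous_cos.continuousAt.div continuous_sinc.continuousAt (by simp)
  have hlim : Tendsto (fun x ↦ cos x / sinc x) (𝓝[≠] 0) (𝓝 1) := by
    simpa using hcont.tendsto.mono_left nhdsWithin_le_nhds
  exact hlim.congr' (eventually_nhdsWithin_of_forall fun x hx ↦ (mul_cot_eq_cos_div_sinc hx).symm)

theorem cot_nonneg {x : ℝ} (h0 : 0 < x) (h1 : x < π / 2) : 0 ≤ cot x := by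
  rw [cot_eq_cos_div_sin]
  exact div_nonneg (cos_nonneg_of_mem_Icc ⟨by linarith, h1.le⟩)
    (sin_pos_of_pos_of_lt_pi h0 (by linarith [pi_pos])).le

theorem mul_cot_le_one {x : ℝ} (h0 : 0 < x) (h1 : x < π / 2) : x * cot x ≤ 1 := by
  have htan := lt_tan h0 h1
  rw [cot_eq_cos_div_sin, ← inv_div, ← tan_eq_sin_div_cos, ← div_eq_mul_inv]
  exact (div_le_one (h0.trans htan)).2 htan.le

end Real

theorem mul_pi_div_two_mul_add_one_mem_Ioo {q n : ℕ} (h : n < q) :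
    (n + 1) * π / (2 * q + 1) ∈ Set.Ioo 0 (π / 2) := by
  have hnq : (n : ℝ) + 1 ≤ q := by exact_mod_cast h
  refine ⟨by positivity, ?_⟩
  rw [div_lt_div_iff₀ (by positivity) two_pos]
  nlinarith [pi_pos]

theorem tendsto_mul_pi_div_two_mul_add_one (n : ℕ) :
    Tendsto (fun q : ℕ ↦ (n + 1) * π / (2 * q + 1)) atTop (𝓝[≠] 0) := by
  have hden : Tendsto (fun q : ℕ ↦ 2 * (q : ℝ) + 1) atTop atTop :=
    tendsto_atTop_add_const_right _ 1 (tendsto_natCast_atTop_atTop.const_mul_atTop two_pos)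
  refine tendsto_nhdsWithin_of_tendsto_nhds_of_eventually_within _
    (tendsto_const_nhds.div_atTop hden) (.of_forall fun q ↦ ?_)
  exact (ne_of_gt (by positivity) : ((n : ℝ) + 1) * π / (2 * q + 1) ≠ 0)

theorem zeta_cot_limit_2q1 (s : ℝ) (hs : 1 < s) :
    Tendsto (fun q : ℕ =>
        (π / (2 * q + 1)) ^ s * ∑ p ∈ Finset.Icc 1 q, (Real.cot (p * π / (2 * q + 1))) ^ s)
      atTop (nhds (∑' n : ℕ, 1 / ((n : ℝ) + 1) ^ s)) := by
  set θ : ℕ → ℕ → ℝ := fun q n ↦ (n + 1) * π / (2 * q + 1)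
  have hsum : Summable fun n : ℕ ↦ 1 / ((n : ℝ) + 1) ^ s := by
    simpa using (summable_nat_add_iff 1).2 (Real.summable_one_div_nat_rpow.2 hs)
  have hc : ∀ q n, n < q → |(θ q n * cot (θ q n)) ^ s| ≤ 1 := fun q n h ↦ by
    obtain ⟨h0, h1⟩ := mul_pi_div_two_mul_add_one_mem_Ioo h
    have hnonneg := mul_nonneg h0.le (cot_nonneg h0 h1)
    rw [abs_of_nonneg (rpow_nonneg hnonneg s)]
    exact rpow_le_one hnonneg (mul_cot_le_one h0 h1) (by linarith)
  have hlim : ∀ n, Tendsto (fun q ↦ (θ q n * cot (θ q n)) ^ s) atTop (𝓝 1) := fun n ↦ by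
    simpa using (tendsto_mul_cot_nhdsNE_zero.comp
      (tendsto_mul_pi_div_two_mul_add_one n)).rpow_const (Or.inl one_ne_zero)
  refine (tendsto_sum_range_mul_of_tendsto_one hsum hc hlim).congr fun q ↦ ?_
  rw [sum_Icc_one_eq_sum_range, mul_sum]
  refine sum_congr rfl fun n hn ↦ ?_
  obtain ⟨h0, h1⟩ := mul_pi_div_two_mul_add_one_mem_Ioo (mem_range.1 hn)
  have hcot := cot_nonneg h0 h1
  simp only [θ, Nat.cast_add, Nat.cast_one, mul_div_assoc] at hcot ⊢
  rw [mul_rpow (by positivity) hcot, mul_rpow (by positivity) (by positivity)]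
  field_simp
end

section
/- For every real number s > 1, ζ(s) = lim_{q→∞} (π/(2q))^s · Σ_{p=1}^{q-1} csc^s(pπ/(2q)). -/
open Real Filter Finset Topology

/-!
With `x = pπ/(2q)`, the `p`-th normalised term `(π/(2q))^s csc^s x` equals `(x / sin x)^s / p^s`.
For fixed `p` it tends to `1 / p^s` as `q → ∞`, since `x → 0`; for `p < q` we have `x ≤ π/2`, so
Jordan's inequality `sin x ≥ 2x/π` bounds it by `(π/2)^s / p^s`, which is summable for `s > 1`.
Tannery's theorem (dominated convergence for series) then gives the limit.
-/

lemma two_div_pi_le_sinc {x : ℝ} (hx₀ : 0 ≤ x) (hx : x ≤ π / 2) : 2 / π ≤ sinc x := by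
  rcases hx₀.eq_or_lt with rfl | hx₀
  · rw [sinc_zero, div_le_one pi_pos]
    exact two_le_pi
  · rw [sinc_of_ne_zero hx₀.ne', le_div_iff₀ hx₀]
    exact mul_le_sin hx₀.le hx

noncomputable def cscTerm (s : ℝ) (q p : ℕ) : ℝ :=
  (π / (2 * q)) ^ s * (sin (p * π / (2 * q)))⁻¹ ^ s

lemma cscTerm_eq {s : ℝ} {q p : ℕ} (hp : 0 < p) (hpq : p ≤ 2 * q) :
    cscTerm s q p = (sinc (p * π / (2 * q)))⁻¹ ^ s / p ^ s := by
  have hp' : (0 : ℝ) < p := by exact_mod_cast hp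
  have hq : (0 : ℝ) < q := by exact_mod_cast (by omega : 0 < q)
  have hx : p * π / (2 * q) ≤ π := by
    rw [div_le_iff₀ (by positivity)]
    have : (p : ℝ) ≤ 2 * q := by exact_mod_cast hpq
    nlinarith [pi_pos]
  have hsin : 0 ≤ sin (p * π / (2 * q)) := sin_nonneg_of_nonneg_of_le_pi (by positivity) hx
  rw [cscTerm, sinc_of_ne_zero (by positivity), inv_div, ← div_rpow (by positivity) hp'.le,
    ← mul_rpow (by positivity) (inv_nonneg.mpr hsin)]
  congr 1
  field_simp

lemma tendsto_cscTerm (s : ℝ) {p : ℕ} (hp : 0 < p) :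
    Tendsto (fun q : ℕ => cscTerm s q p) atTop (𝓝 (1 / p ^ s)) := by
  have hx : Tendsto (fun q : ℕ => p * π / (2 * q)) atTop (𝓝 0) := by
    simpa only [div_mul_eq_div_div] using tendsto_const_div_atTop_nhds_zero_nat (p * π / 2)
  have hsinc : Tendsto (fun q : ℕ => (sinc (p * π / (2 * q)))⁻¹ ^ s / p ^ s) atTop
      (𝓝 ((sinc 0)⁻¹ ^ s / p ^ s)) :=
    (((continuous_sinc.tendsto 0).comp hx).inv₀ (by simp)).rpow_const (by simp) |>.div_const _
  rw [sinc_zero, inv_one, one_rpow] at hsinc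
  refine hsinc.congr' ?_
  filter_upwards [eventually_ge_atTop p] with q hq
  rw [cscTerm_eq hp (by omega)]

lemma norm_cscTerm_le {s : ℝ} (hs : 0 ≤ s) {q p : ℕ} (hp : 0 < p) (hpq : p ≤ q) :
    ‖cscTerm s q p‖ ≤ (π / 2) ^ s * (1 / p ^ s) := by
  have hsinc : 2 / π ≤ sinc (p * π / (2 * q)) := by
    have hq : (0 : ℝ) < q := by exact_mod_cast hp.trans_le hpq
    refine two_div_pi_le_sinc (by positivity) ?_
    rw [div_le_div_iff₀ (by positivity) two_pos]
    have : (p : ℝ) ≤ q := by exact_mod_cast hpq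
    nlinarith [pi_pos]
  have hsinc_inv : (sinc (p * π / (2 * q)))⁻¹ ≤ π / 2 := by
    simpa only [inv_div] using inv_anti₀ (by positivity) hsinc
  have hsinc_pos : 0 < sinc (p * π / (2 * q)) := (by positivity : (0 : ℝ) < 2 / π).trans_le hsinc
  rw [cscTerm_eq hp (by omega), norm_of_nonneg (by positivity), ← mul_one_div]
  gcongr

lemma tendsto_indicator_cscTerm {s : ℝ} (hs : 0 < s) (p : ℕ) :
    Tendsto (fun q : ℕ => Set.indicator ↑(Icc 1 (q - 1)) (cscTerm s q) p) atTop
      (𝓝 (1 / (p : ℝ) ^ s)) := by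
  rcases p.eq_zero_or_pos with rfl | hp
  · simp [zero_rpow hs.ne']
  refine (tendsto_cscTerm s hp).congr' ?_
  filter_upwards [eventually_gt_atTop p] with q hq
  rw [Set.indicator_of_mem (mem_coe.mpr (mem_Icc.mpr ⟨hp, by omega⟩))]

lemma norm_indicator_cscTerm_le {s : ℝ} (hs : 0 ≤ s) (q p : ℕ) :
    ‖Set.indicator ↑(Icc 1 (q - 1)) (cscTerm s q) p‖ ≤ (π / 2) ^ s * (1 / p ^ s) := by
  by_cases hpq : p ∈ Icc 1 (q - 1)
  · rw [Set.indicator_of_mem (mem_coe.mpr hpq)]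
    rw [mem_Icc] at hpq
    exact norm_cscTerm_le hs hpq.1 (by omega)
  · rw [Set.indicator_of_notMem (mt mem_coe.mp hpq), norm_zero]
    positivity

theorem zeta_csc_limit_even (s : ℝ) (hs : 1 < s) :
    Tendsto (fun q : ℕ =>
        (π / (2 * q)) ^ s * ∑ p ∈ Finset.Icc 1 (q - 1), ((Real.sin (p * π / (2 * q)))⁻¹) ^ s)
      atTop (nhds (∑' n : ℕ, 1 / ((n : ℝ) + 1) ^ s)) := by
  have hsummable : Summable fun n : ℕ => 1 / (n : ℝ) ^ s := summable_one_div_nat_rpow.mpr hs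
  have hlim := tendsto_tsum_of_dominated_convergence (hsummable.mul_left ((π / 2) ^ s))
    (tendsto_indicator_cscTerm (by linarith)) (.of_forall (norm_indicator_cscTerm_le (by linarith)))
  rw [hsummable.tsum_eq_zero_add, Nat.cast_zero, zero_rpow (by linarith), div_zero, zero_add]
    at hlim
  simp only [Nat.cast_add, Nat.cast_one] at hlim
  refine hlim.congr fun q => ?_
  rw [mul_sum, ← sum_eq_tsum_indicator]
  rfl
end
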